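/- Intrinsic steerability is convex: let {ρ̂^{a,x}} and {σ̂^{a,x}} be assemblages with the same input set Fin s, output set Fin r, and Bob space ℂ^{dB}, and let λ ∈ [0,1]. Then the mixture τ̂^{a,x} := λ·ρ̂^{a,x} + (1-λ)·σ̂^{a,x} is an assemblage and S(Ā;B)_τ̂ ≤ λ·S(Ā;B)_ρ̂ + (1-λ)·S(Ā;B)_σ̂. -/

import Mathlib

open scoped BigOperators
open Matrix Kronecker
open scoped ComplexOrder

noncomputable section

/-- `φ(t) = -t·log₂ t`. -/
noncomputable def entPhi (t : ℝ) : ℝ := -(t * Real.logb 2 t)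

/-- von Neumann entropy (in bits) of a Hermitian matrix, via its eigenvalues. -/
noncomputable def vnEntropy {n : Type*} [Fintype n] [DecidableEq n] (ρ : Matrix n n ℂ) : ℝ :=
  if h : ρ.IsHermitian then ∑ i, entPhi (h.eigenvalues i) else 0

/-- Partial trace over the second factor. -/
def ptrace2 {I J : Type*} [Fintype J] (ρ : Matrix (I × J) (I × J) ℂ) : Matrix I I ℂ :=
  Matrix.of fun i i' => ∑ j, ρ (i, j) (i', j)

/-- Partial trace over the first factor. -/
def ptrace1 {I J : Type*} [Fintype I] (ρ : Matrix (I × J) (I × J) ℂ) : Matrix J J ℂ :=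
  Matrix.of fun j j' => ∑ i, ρ (i, j) (i, j')

/-- Marginal on `K × M` of a state on `K × L × M`. -/
def margKM {K L M : Type*} [Fintype L] (σ : Matrix (K × L × M) (K × L × M) ℂ) :
    Matrix (K × M) (K × M) ℂ :=
  Matrix.of fun p q => ∑ l, σ (p.1, l, p.2) (q.1, l, q.2)

/-- Marginal on `L × M` of a state on `K × L × M`. -/
def margLM {K L M : Type*} [Fintype K] (σ : Matrix (K × L × M) (K × L × M) ℂ) :
    Matrix (L × M) (L × M) ℂ :=
  Matrix.of fun p q => ∑ k, σ (k, p.1, p.2) (k, q.1, q.2)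

/-- Marginal on `M` of a state on `K × L × M`. -/
def margM {K L M : Type*} [Fintype K] [Fintype L] (σ : Matrix (K × L × M) (K × L × M) ℂ) :
    Matrix M M ℂ :=
  Matrix.of fun m m' => ∑ k, ∑ l, σ (k, l, m) (k, l, m')

/-- Conditional mutual information `I(K;L|M)` of a state on `K × L × M`. -/
noncomputable def CMI {K L M : Type*} [Fintype K] [Fintype L] [Fintype M]
    [DecidableEq K] [DecidableEq L] [DecidableEq M]
    (σ : Matrix (K × L × M) (K × L × M) ℂ) : ℝ :=
  vnEntropy (margKM σ) + vnEntropy (margLM σ) - vnEntropy σ - vnEntropy (margM σ)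

def IsProbDist {X : Type*} [Fintype X] (p : X → ℝ) : Prop :=
  (∀ x, 0 ≤ p x) ∧ ∑ x, p x = 1

/-- An assemblage: PSD members, normalized for each input, and no-signaling. -/
def IsAssemblage {A X B : Type*} [Fintype A] [Fintype B]
    (ρ : A → X → Matrix B B ℂ) : Prop :=
  (∀ a x, (ρ a x).PosSemidef) ∧
  (∀ x, ∑ a, (ρ a x).trace = 1) ∧
  (∀ x x' : X, ∑ a, ρ a x = ∑ a, ρ a x')

/-- Apply one branch (CP map with Kraus operators `V u`) of a quantum instrument. -/
def instrApply {B : Type*} [Fintype B] {dB' nk : ℕ}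
    (V : Fin nk → Matrix (Fin dB') B ℂ) (σ : Matrix B B ℂ) :
    Matrix (Fin dB') (Fin dB') ℂ :=
  ∑ u, V u * σ * (V u)ᴴ

/-- The classical-quantum state `∑_{x,a,y} p(x|y)·|x⟩⟨x| ⊗ |a⟩⟨a| ⊗ ext^{a,x,y} ⊗ |y⟩⟨y|`. -/
def cqStateS {A X : Type*} [DecidableEq A] [DecidableEq X] {dB' dE m : ℕ}
    (p : X → Fin m → ℝ)
    (ext : A → X → Fin m → Matrix (Fin dB' × Fin dE) (Fin dB' × Fin dE) ℂ) :
    Matrix ((X × A) × Fin dB' × Fin dE × Fin m) ((X × A) × Fin dB' × Fin dE × Fin m) ℂ :=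
  Matrix.of fun q q' =>
    if q.1 = q'.1 ∧ q.2.2.2 = q'.2.2.2 then
      (p q.1.1 q.2.2.2 : ℂ) * ext q.1.2 q.1.1 q.2.2.2 (q.2.1, q.2.2.1) (q'.2.1, q'.2.2.1)
    else 0

/-- Intrinsic steerability `S(Ā;B)`: sup over 1W-LOCC operations (instruments `V` together
with conditional distributions `pXY`), inf over non-signaling extensions, of `I(XĀ;B'|EY)`. -/
noncomputable def IS {A X B : Type*} [Fintype A] [Fintype X] [Fintype B]
    [DecidableEq A] [DecidableEq X] [DecidableEq B]
    (ρ : A → X → Matrix B B ℂ) : ℝ :=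
  sSup { v : ℝ | ∃ (m dB' nk : ℕ) (V : Fin m → Fin nk → Matrix (Fin dB') B ℂ)
      (pXY : X → Fin m → ℝ), 1 ≤ m ∧ 1 ≤ dB' ∧
      (∑ y, ∑ u, (V y u)ᴴ * V y u) = (1 : Matrix B B ℂ) ∧
      (∀ y, IsProbDist fun x => pXY x y) ∧
      v = sInf { w : ℝ | ∃ dE : ℕ, 1 ≤ dE ∧
        ∃ ext : A → X → Fin m → Matrix (Fin dB' × Fin dE) (Fin dB' × Fin dE) ℂ,
          (∀ a x y, (ext a x y).PosSemidef) ∧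
          (∀ a x y, ptrace2 (ext a x y) = instrApply (V y) (ρ a x)) ∧
          (∀ (x x' : X) (y : Fin m), ∑ a, ext a x y = ∑ a, ext a x' y) ∧
          w = CMI (cqStateS pXY ext) } }

/-!
Fix a 1W-LOCC operation. Given non-signaling extensions of `ρ` (on `E₁`) and of `σ` (on `E₂`),
the extension of `λρ + (1-λ)σ` on `E₁ ⊕ E₂` that stores a classical flag for the summand is again
non-signaling, and since the flag sits in the conditioning system its conditional mutual
information is exactly the `λ`-average of the two. So for every operation the infimum over
extensions is convex, and the supremum over operations inherits this. The suprema are finite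
(so that the bound is not a junk value): the trivial extension has `I(XĀ;B'|Y) ≤ log₂ |X×Ā|`,
which for a state classical on `XĀ` and `Y` reduces to the subadditivity `H(∑ₖ Bₖ) ≤ ∑ₖ H(Bₖ)`.
-/

section EntPhi

lemma entPhi_mul (c t : ℝ) : entPhi (c * t) = c * entPhi t + t * entPhi c := by
  rcases eq_or_ne c 0 with rfl | hc
  · simp [entPhi]
  rcases eq_or_ne t 0 with rfl | ht
  · simp [entPhi]
  simp only [entPhi, Real.logb_mul hc ht]
  ring

lemma concaveOn_entPhi : ConcaveOn ℝ (Set.Ici 0) entPhi := by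
  have h : entPhi = fun t => (Real.log 2)⁻¹ • Real.negMulLog t := by
    ext t
    simp only [entPhi, Real.negMulLog, Real.logb, smul_eq_mul]
    ring
  exact h ▸ Real.concaveOn_negMulLog.smul (by positivity)

lemma sum_entPhi_le {ι : Type*} [Fintype ι] {q : ι → ℝ} (hq : ∀ i, 0 ≤ q i) :
    ∑ i, entPhi (q i) ≤ (∑ i, q i) * Real.logb 2 (Fintype.card ι) + entPhi (∑ i, q i) := by
  rcases isEmpty_or_nonempty ι with hι | hι
  · simp [entPhi]
  set N : ℝ := (Fintype.card ι : ℝ)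
  have hN : 0 < N := Nat.cast_pos.2 Fintype.card_pos
  have jensen : ∑ i, N⁻¹ * entPhi (q i) ≤ entPhi (∑ i, N⁻¹ * q i) := by
    simpa [smul_eq_mul] using concaveOn_entPhi.le_map_sum (t := Finset.univ) (w := fun _ => N⁻¹)
      (fun _ _ => by positivity) (by simp [N, hN.ne']) (fun i _ => Set.mem_Ici.2 (hq i))
  rw [← Finset.mul_sum, ← Finset.mul_sum, entPhi_mul] at jensen
  have hinv : entPhi N⁻¹ = N⁻¹ * Real.logb 2 N := by simp [entPhi, Real.logb_inv]
  rw [hinv] at jensen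
  have := mul_le_mul_of_nonneg_left jensen hN.le
  field_simp at this
  linarith

end EntPhi

section SpectralEntropy

open Polynomial

/-- Reading the entropy off the characteristic polynomial turns reindexing, block sums and
`AB ↔ BA` into charpoly identities. -/
def rootEntropy (p : ℂ[X]) : ℝ := (p.roots.map fun z => entPhi z.re).sum

lemma rootEntropy_mul {p q : ℂ[X]} (hp : p ≠ 0) (hq : q ≠ 0) :
    rootEntropy (p * q) = rootEntropy p + rootEntropy q := by
  simp [rootEntropy, roots_mul (mul_ne_zero hp hq)]

lemma rootEntropy_prod {ι : Type*} (s : Finset ι) (p : ι → ℂ[X]) (hp : ∀ i, p i ≠ 0) :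
    rootEntropy (∏ i ∈ s, p i) = ∑ i ∈ s, rootEntropy (p i) := by
  classical
  induction s using Finset.induction_on with
  | empty => simp [rootEntropy]
  | insert i s hi ih =>
    rw [Finset.prod_insert hi, Finset.sum_insert hi,
      rootEntropy_mul (hp i) (Finset.prod_ne_zero_iff.2 fun j _ => hp j), ih]

lemma rootEntropy_X_pow_mul (k : ℕ) {p : ℂ[X]} (hp : p ≠ 0) :
    rootEntropy (X ^ k * p) = rootEntropy p := by
  rw [rootEntropy_mul (pow_ne_zero _ X_ne_zero) hp]
  simp [rootEntropy, entPhi, Multiset.map_nsmul, Multiset.sum_nsmul]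

variable {n m : Type*} [Fintype n] [DecidableEq n] [Fintype m] [DecidableEq m]

lemma vnEntropy_eq_rootEntropy {A : Matrix n n ℂ} (hA : A.IsHermitian) :
    vnEntropy A = rootEntropy A.charpoly := by
  rw [vnEntropy, dif_pos hA, rootEntropy, hA.roots_charpoly_eq_eigenvalues, Multiset.map_map]
  rfl

lemma vnEntropy_eq_of_charpoly_eq {A : Matrix n n ℂ} {B : Matrix m m ℂ} (hA : A.IsHermitian)
    (hB : B.IsHermitian) (h : A.charpoly = B.charpoly) : vnEntropy A = vnEntropy B := by
  rw [vnEntropy_eq_rootEntropy hA, vnEntropy_eq_rootEntropy hB, h]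

lemma vnEntropy_submatrix_equiv (e : m ≃ n) (A : Matrix n n ℂ) :
    vnEntropy (A.submatrix e e) = vnEntropy A := by
  by_cases hA : A.IsHermitian
  · exact vnEntropy_eq_of_charpoly_eq (hA.submatrix _) hA (Matrix.charpoly_reindex e.symm A)
  · have hA' : ¬ (A.submatrix e e).IsHermitian := fun h => hA <| by
      simpa using h.submatrix e.symm
    rw [vnEntropy, dif_neg hA', vnEntropy, dif_neg hA]

lemma vnEntropy_fromBlocks {A : Matrix n n ℂ} {B : Matrix m m ℂ} (hA : A.IsHermitian)
    (hB : B.IsHermitian) :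
    vnEntropy (Matrix.fromBlocks A 0 0 B) = vnEntropy A + vnEntropy B := by
  have hAB : (Matrix.fromBlocks A 0 0 B).IsHermitian :=
    Matrix.IsHermitian.fromBlocks hA (by simp) hB
  rw [vnEntropy_eq_rootEntropy hAB, vnEntropy_eq_rootEntropy hA, vnEntropy_eq_rootEntropy hB,
    Matrix.charpoly_fromBlocks_zero₁₂, rootEntropy_mul A.charpoly_monic.ne_zero
      B.charpoly_monic.ne_zero]

lemma charmatrix_blockDiagonal {R : Type*} [CommRing R] (M : m → Matrix n n R) :
    (Matrix.blockDiagonal M).charmatrix = Matrix.blockDiagonal fun k => (M k).charmatrix := by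
  ext ⟨i, k⟩ ⟨j, l⟩
  by_cases hkl : k = l
  · subst hkl
    by_cases hij : i = j
    · subst hij; simp
    · simp [Matrix.blockDiagonal_apply, hij]
  · simp [Matrix.blockDiagonal_apply, hkl]

lemma vnEntropy_blockDiagonal {M : m → Matrix n n ℂ} (hM : ∀ k, (M k).IsHermitian) :
    vnEntropy (Matrix.blockDiagonal M) = ∑ k, vnEntropy (M k) := by
  have hcharpoly : (Matrix.blockDiagonal M).charpoly = ∏ k, (M k).charpoly := by
    rw [Matrix.charpoly, charmatrix_blockDiagonal, Matrix.det_blockDiagonal]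
    rfl
  rw [vnEntropy_eq_rootEntropy (Matrix.isHermitian_blockDiagonal_iff.2 hM), hcharpoly,
    rootEntropy_prod _ _ fun k => (M k).charpoly_monic.ne_zero]
  exact Finset.sum_congr rfl fun k _ => (vnEntropy_eq_rootEntropy (hM k)).symm

lemma vnEntropy_diagonal (d : n → ℝ) :
    vnEntropy (Matrix.diagonal fun i => (d i : ℂ)) = ∑ i, entPhi (d i) := by
  have hprod : ∏ i, (X - C (d i : ℂ))
      = ((Finset.univ.val.map fun i => (d i : ℂ)).map fun a => X - C a).prod := by
    rw [Multiset.map_map]; rfl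
  rw [vnEntropy_eq_rootEntropy (Matrix.isHermitian_diagonal_iff.2 fun i => Complex.conj_ofReal _),
    Matrix.charpoly_diagonal, hprod, rootEntropy, roots_multiset_prod_X_sub_C, Multiset.map_map]
  rfl

lemma vnEntropy_real_smul {A : Matrix n n ℂ} (hA : A.IsHermitian) (c : ℝ) :
    vnEntropy ((c : ℂ) • A) = c * vnEntropy A + A.trace.re * entPhi c := by
  set U := (hA.eigenvectorUnitary : Matrix n n ℂ)
  have hUU : star U * U = 1 := Matrix.mem_unitaryGroup_iff'.mp hA.eigenvectorUnitary.2
  have hcA : (c : ℂ) • A = U * (Matrix.diagonal fun i => ((c * hA.eigenvalues i : ℝ) : ℂ))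
      * star U := by
    have hD : (Matrix.diagonal fun i => ((c * hA.eigenvalues i : ℝ) : ℂ))
        = (c : ℂ) • Matrix.diagonal (RCLike.ofReal ∘ hA.eigenvalues) := by
      ext i j
      by_cases hij : i = j <;> simp [hij]
    conv_lhs => rw [hA.spectral_theorem, Unitary.conjStarAlgAut_apply]
    rw [hD, Matrix.mul_smul, Matrix.smul_mul]
  have hcharpoly : ((c : ℂ) • A).charpoly
      = (Matrix.diagonal fun i => ((c * hA.eigenvalues i : ℝ) : ℂ)).charpoly := by
    rw [hcA, Matrix.charpoly_mul_comm, ← Matrix.mul_assoc, hUU, Matrix.one_mul]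
  rw [vnEntropy_eq_of_charpoly_eq (hA.smul (Complex.conj_ofReal c))
      (Matrix.isHermitian_diagonal_iff.2 fun i => Complex.conj_ofReal _) hcharpoly,
    vnEntropy_diagonal, hA.trace_eq_sum_eigenvalues, vnEntropy, dif_pos hA]
  simp only [entPhi_mul, Finset.sum_add_distrib, ← Finset.mul_sum, ← Finset.sum_mul]
  simp

lemma vnEntropy_mul_conjTranspose_comm (M : Matrix n m ℂ) :
    vnEntropy (M * Mᴴ) = vnEntropy (Mᴴ * M) := by
  rw [vnEntropy_eq_rootEntropy (Matrix.isHermitian_mul_conjTranspose_self M),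
    vnEntropy_eq_rootEntropy (Matrix.isHermitian_conjTranspose_mul_self M),
    ← rootEntropy_X_pow_mul (Fintype.card m) (M * Mᴴ).charpoly_monic.ne_zero,
    ← rootEntropy_X_pow_mul (Fintype.card n) (Mᴴ * M).charpoly_monic.ne_zero,
    Matrix.charpoly_mul_comm']

end SpectralEntropy

section Subadditivity

variable {n : Type*} [Fintype n] [DecidableEq n]

lemma Matrix.IsHermitian.apply_eq_sum_eigenvalues {A : Matrix n n ℂ} (hA : A.IsHermitian)
    (j j' : n) : A j j' = ∑ i, (hA.eigenvectorUnitary : Matrix n n ℂ) j i * hA.eigenvalues i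
      * star ((hA.eigenvectorUnitary : Matrix n n ℂ) j' i) := by
  conv_lhs => rw [hA.spectral_theorem, Unitary.conjStarAlgAut_apply]
  simp [Matrix.mul_apply, Matrix.diagonal_apply]

lemma Matrix.IsHermitian.sum_normSq_eigenvectorUnitary_row {A : Matrix n n ℂ}
    (hA : A.IsHermitian) (j : n) :
    ∑ i, Complex.normSq ((hA.eigenvectorUnitary : Matrix n n ℂ) j i) = 1 := by
  have h := congrFun (congrFun (Matrix.mem_unitaryGroup_iff.mp hA.eigenvectorUnitary.2) j) j
  simp only [Matrix.mul_apply, Matrix.star_apply, Matrix.one_apply_eq, Complex.star_def,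
    Complex.mul_conj] at h
  exact_mod_cast h

lemma Matrix.IsHermitian.sum_normSq_eigenvectorUnitary_col {A : Matrix n n ℂ}
    (hA : A.IsHermitian) (i : n) :
    ∑ j, Complex.normSq ((hA.eigenvectorUnitary : Matrix n n ℂ) j i) = 1 := by
  have h := congrFun (congrFun (Matrix.mem_unitaryGroup_iff'.mp hA.eigenvectorUnitary.2) i) i
  simp only [Matrix.mul_apply, Matrix.star_apply, Matrix.one_apply_eq, Complex.star_def,
    mul_comm (starRingEnd ℂ _), Complex.mul_conj] at h
  exact_mod_cast h

/-- The diagonal of `A` is a doubly stochastic average of its eigenvalues; by concavity of `φ`. -/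
lemma vnEntropy_le_sum_entPhi_diag {A : Matrix n n ℂ} (hA : A.PosSemidef) :
    vnEntropy A ≤ ∑ j, entPhi (A j j).re := by
  have hH : A.IsHermitian := hA.1
  have hdiag : ∀ j, (A j j).re
      = ∑ i, Complex.normSq ((hH.eigenvectorUnitary : Matrix n n ℂ) j i) * hH.eigenvalues i := by
    intro j
    rw [hH.apply_eq_sum_eigenvalues, Complex.re_sum]
    refine Finset.sum_congr rfl fun i _ => ?_
    rw [mul_right_comm, Complex.star_def, Complex.mul_conj, ← Complex.ofReal_mul,
      Complex.ofReal_re]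
  set U := (hH.eigenvectorUnitary : Matrix n n ℂ)
  calc vnEntropy A
      = ∑ i, (∑ j, Complex.normSq (U j i)) * entPhi (hH.eigenvalues i) := by
        simp only [hH.sum_normSq_eigenvectorUnitary_col, one_mul, vnEntropy, dif_pos hH, U]
    _ = ∑ j, ∑ i, Complex.normSq (U j i) * entPhi (hH.eigenvalues i) := by
        simp only [Finset.sum_mul]
        exact Finset.sum_comm
    _ ≤ ∑ j, entPhi (∑ i, Complex.normSq (U j i) * hH.eigenvalues i) := by
        gcongr with j
        exact concaveOn_entPhi.le_map_sum (fun i _ => Complex.normSq_nonneg _)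
          (hH.sum_normSq_eigenvectorUnitary_row j)
          (fun i _ => Set.mem_Ici.2 (hA.eigenvalues_nonneg i))
    _ = ∑ j, entPhi (A j j).re := by simp only [hdiag, U]

/-- `∑ₖ Bₖ = M Mᴴ`, where the columns of `M` are the eigenvectors of all the `Bₖ` weighted by
`√λ`; then `Mᴴ M` has the same entropy and its diagonal lists the eigenvalues of the `Bₖ`. -/
lemma vnEntropy_sum_le {K : Type*} [Fintype K] {B : K → Matrix n n ℂ}
    (hB : ∀ k, (B k).PosSemidef) : vnEntropy (∑ k, B k) ≤ ∑ k, vnEntropy (B k) := by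
  classical
  let U : K → Matrix n n ℂ := fun k => ((hB k).1.eigenvectorUnitary : Matrix n n ℂ)
  let e : K → n → ℝ := fun k => (hB k).1.eigenvalues
  let M : Matrix n (K × n) ℂ := Matrix.of fun j p => U p.1 j p.2 * (Real.sqrt (e p.1 p.2) : ℂ)
  have hsqrt : ∀ k i, ((Real.sqrt (e k i) : ℂ)) * (Real.sqrt (e k i) : ℂ) = e k i := fun k i => by
    rw [← Complex.ofReal_mul, Real.mul_self_sqrt ((hB k).eigenvalues_nonneg i)]
  have hMM : M * Mᴴ = ∑ k, B k := by
    ext j j'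
    rw [Matrix.mul_apply, Matrix.sum_apply, Fintype.sum_prod_type]
    refine Finset.sum_congr rfl fun k _ => ?_
    rw [(hB k).1.apply_eq_sum_eigenvalues]
    refine Finset.sum_congr rfl fun i _ => ?_
    simp only [M, Matrix.conjTranspose_apply, Matrix.of_apply, star_mul', Complex.star_def,
      Complex.conj_ofReal]
    linear_combination (U k j i * (starRingEnd ℂ) (U k j' i)) * hsqrt k i
  have hdiag : ∀ p : K × n, ((Mᴴ * M) p p).re = e p.1 p.2 := by
    rintro ⟨k, i⟩
    have hcol : ∑ j, Complex.normSq (U k j i) = 1 := (hB k).1.sum_normSq_eigenvectorUnitary_col i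
    have hterm : ∀ j, (starRingEnd ℂ) (U k j i) * (Real.sqrt (e k i) : ℂ)
        * (U k j i * (Real.sqrt (e k i) : ℂ)) = ((Complex.normSq (U k j i) * e k i : ℝ) : ℂ) := by
      intro j
      rw [Complex.ofReal_mul, ← hsqrt, Complex.normSq_eq_conj_mul_self]
      ring
    simp only [Matrix.mul_apply, M, Matrix.conjTranspose_apply, Matrix.of_apply, star_mul',
      Complex.star_def, Complex.conj_ofReal, hterm, ← Complex.ofReal_sum, Complex.ofReal_re,
      ← Finset.sum_mul, hcol, one_mul]
  calc vnEntropy (∑ k, B k) = vnEntropy (Mᴴ * M) := by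
        rw [← hMM, vnEntropy_mul_conjTranspose_comm]
    _ ≤ ∑ p : K × n, entPhi ((Mᴴ * M) p p).re :=
        vnEntropy_le_sum_entPhi_diag (Matrix.posSemidef_conjTranspose_mul_self M)
    _ = ∑ k, vnEntropy (B k) := by
        simp [hdiag, Fintype.sum_prod_type, vnEntropy, (hB _).1, e]

end Subadditivity

section ConditionalMutualInformation

variable {K L M M₁ M₂ : Type*}

lemma isHermitian_margKM [Fintype L] {σ : Matrix (K × L × M) (K × L × M) ℂ} (h : σ.IsHermitian) :
    (margKM σ).IsHermitian :=
  Matrix.IsHermitian.ext fun p q => by simp [margKM, star_sum, h.apply]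

lemma isHermitian_margLM [Fintype K] {σ : Matrix (K × L × M) (K × L × M) ℂ} (h : σ.IsHermitian) :
    (margLM σ).IsHermitian :=
  Matrix.IsHermitian.ext fun p q => by simp [margLM, star_sum, h.apply]

lemma isHermitian_margM [Fintype K] [Fintype L] {σ : Matrix (K × L × M) (K × L × M) ℂ}
    (h : σ.IsHermitian) :
    (margM σ).IsHermitian :=
  Matrix.IsHermitian.ext fun p q => by simp [margM, star_sum, h.apply]

/-- The state on `K × L × M` that is `σ₁` or `σ₂` according to a classical flag `e : M ≃ M₁ ⊕ M₂`
in the conditioning system. -/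
def condSum (e : M ≃ M₁ ⊕ M₂) (σ₁ : Matrix (K × L × M₁) (K × L × M₁) ℂ)
    (σ₂ : Matrix (K × L × M₂) (K × L × M₂) ℂ) : Matrix (K × L × M) (K × L × M) ℂ :=
  (Matrix.fromBlocks σ₁ 0 0 σ₂).submatrix
    (((Equiv.refl K).prodCongr (((Equiv.refl L).prodCongr e).trans
      (Equiv.prodSumDistrib L M₁ M₂))).trans (Equiv.prodSumDistrib K _ _))
    (((Equiv.refl K).prodCongr (((Equiv.refl L).prodCongr e).trans
      (Equiv.prodSumDistrib L M₁ M₂))).trans (Equiv.prodSumDistrib K _ _))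

variable [Fintype K] [Fintype L] [Fintype M]

lemma trace_margKM (σ : Matrix (K × L × M) (K × L × M) ℂ) : (margKM σ).trace = σ.trace := by
  simp only [Matrix.trace, margKM, Matrix.diag, Matrix.of_apply, Fintype.sum_prod_type]
  exact Finset.sum_congr rfl fun k _ => Finset.sum_comm

lemma trace_margLM (σ : Matrix (K × L × M) (K × L × M) ℂ) : (margLM σ).trace = σ.trace := by
  rw [Matrix.trace, Matrix.trace, Fintype.sum_prod_type (f := fun q => σ.diag q), Finset.sum_comm]
  rfl

lemma trace_margM (σ : Matrix (K × L × M) (K × L × M) ℂ) : (margM σ).trace = σ.trace := by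
  simp only [Matrix.trace, margM, Matrix.diag, Matrix.of_apply, Fintype.sum_prod_type]
  rw [Finset.sum_comm]
  exact Finset.sum_congr rfl fun k _ => Finset.sum_comm

variable [DecidableEq K] [DecidableEq L] [DecidableEq M] [Fintype M₁] [DecidableEq M₁]
  [Fintype M₂] [DecidableEq M₂]

lemma CMI_real_smul {σ : Matrix (K × L × M) (K × L × M) ℂ} (hσ : σ.IsHermitian) (c : ℝ) :
    CMI ((c : ℂ) • σ) = c * CMI σ := by
  have hKM : margKM ((c : ℂ) • σ) = (c : ℂ) • margKM σ := by
    ext; simp [margKM, Finset.mul_sum]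
  have hLM : margLM ((c : ℂ) • σ) = (c : ℂ) • margLM σ := by
    ext; simp [margLM, Finset.mul_sum]
  have hM : margM ((c : ℂ) • σ) = (c : ℂ) • margM σ := by
    ext; simp [margM, Finset.mul_sum]
  simp only [CMI, hKM, hLM, hM, vnEntropy_real_smul hσ,
    vnEntropy_real_smul (isHermitian_margKM hσ), vnEntropy_real_smul (isHermitian_margLM hσ),
    vnEntropy_real_smul (isHermitian_margM hσ), trace_margKM, trace_margLM, trace_margM]
  ring

lemma CMI_condSum (e : M ≃ M₁ ⊕ M₂) {σ₁ : Matrix (K × L × M₁) (K × L × M₁) ℂ}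
    {σ₂ : Matrix (K × L × M₂) (K × L × M₂) ℂ} (h₁ : σ₁.IsHermitian) (h₂ : σ₂.IsHermitian) :
    CMI (condSum e σ₁ σ₂) = CMI σ₁ + CMI σ₂ := by
  have hKM : margKM (condSum e σ₁ σ₂) = (Matrix.fromBlocks (margKM σ₁) 0 0 (margKM σ₂)).submatrix
      (((Equiv.refl K).prodCongr e).trans (Equiv.prodSumDistrib K M₁ M₂))
      (((Equiv.refl K).prodCongr e).trans (Equiv.prodSumDistrib K M₁ M₂)) := by
    ext ⟨k, m⟩ ⟨k', m'⟩
    obtain ⟨m | m, rfl⟩ := e.symm.surjective m <;> obtain ⟨m' | m', rfl⟩ := e.symm.surjective m' <;>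
      simp [margKM, condSum]
  have hLM : margLM (condSum e σ₁ σ₂) = (Matrix.fromBlocks (margLM σ₁) 0 0 (margLM σ₂)).submatrix
      (((Equiv.refl L).prodCongr e).trans (Equiv.prodSumDistrib L M₁ M₂))
      (((Equiv.refl L).prodCongr e).trans (Equiv.prodSumDistrib L M₁ M₂)) := by
    ext ⟨l, m⟩ ⟨l', m'⟩
    obtain ⟨m | m, rfl⟩ := e.symm.surjective m <;> obtain ⟨m' | m', rfl⟩ := e.symm.surjective m' <;>
      simp [margLM, condSum]
  have hM : margM (condSum e σ₁ σ₂)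
      = (Matrix.fromBlocks (margM σ₁) 0 0 (margM σ₂)).submatrix e e := by
    ext m m'
    obtain ⟨m | m, rfl⟩ := e.symm.surjective m <;> obtain ⟨m' | m', rfl⟩ := e.symm.surjective m' <;>
      simp [margM, condSum]
  rw [CMI, hKM, hLM, hM, condSum]
  simp only [vnEntropy_submatrix_equiv, vnEntropy_fromBlocks h₁ h₂,
    vnEntropy_fromBlocks (isHermitian_margKM h₁) (isHermitian_margKM h₂),
    vnEntropy_fromBlocks (isHermitian_margLM h₁) (isHermitian_margLM h₂),
    vnEntropy_fromBlocks (isHermitian_margM h₁) (isHermitian_margM h₂), CMI]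
  ring

lemma CMI_eq_zero_of_unique [Unique L] (σ : Matrix (K × L × M) (K × L × M) ℂ) : CMI σ = 0 := by
  have hKM : margKM σ = σ.submatrix ((Equiv.refl K).prodCongr (Equiv.uniqueProd M L).symm)
      ((Equiv.refl K).prodCongr (Equiv.uniqueProd M L).symm) := by
    ext; simp only [margKM, Matrix.of_apply, Fintype.sum_unique]; rfl
  have hLM : margLM σ = (margM σ).submatrix (Equiv.uniqueProd M L) (Equiv.uniqueProd M L) := by
    ext ⟨l, m⟩ ⟨l', m'⟩
    simp [margLM, margM, Subsingleton.elim l default, Subsingleton.elim l' default]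
  rw [CMI, hKM, hLM, vnEntropy_submatrix_equiv, vnEntropy_submatrix_equiv]
  ring

end ConditionalMutualInformation

section ClassicalQuantum

variable {K L M : Type*} [DecidableEq K] [DecidableEq M]

/-- A state on `K × L × M` that is classical on `K` and on `M`, with blocks `B k m` on `L`. -/
def cqMatrix (B : K → M → Matrix L L ℂ) : Matrix (K × L × M) (K × L × M) ℂ :=
  Matrix.of fun q q' => if q.1 = q'.1 ∧ q.2.2 = q'.2.2 then B q.1 q.2.2 q.2.1 q'.2.1 else 0

lemma vnEntropy_cqMatrix [Fintype K] [Fintype L] [DecidableEq L] [Fintype M]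
    {B : K → M → Matrix L L ℂ} (hB : ∀ k m, (B k m).IsHermitian) :
    vnEntropy (cqMatrix B) = ∑ k, ∑ m, vnEntropy (B k m) := by
  let e : K × L × M ≃ L × K × M := (Equiv.prodAssoc K L M).symm.trans
    (((Equiv.prodComm K L).prodCongr (Equiv.refl M)).trans (Equiv.prodAssoc L K M))
  have h : cqMatrix B = (Matrix.blockDiagonal fun p : K × M => B p.1 p.2).submatrix e e := by
    ext ⟨k, l, m⟩ ⟨k', l', m'⟩
    simp [cqMatrix, e, Matrix.blockDiagonal_apply, Prod.ext_iff]
  rw [h, vnEntropy_submatrix_equiv,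
    vnEntropy_blockDiagonal (M := fun p : K × M => B p.1 p.2) fun p => hB p.1 p.2,
    Fintype.sum_prod_type]

lemma margLM_cqMatrix [Fintype K] (B : K → M → Matrix L L ℂ) :
    margLM (cqMatrix B) = Matrix.blockDiagonal fun m => ∑ k, B k m := by
  ext ⟨l, m⟩ ⟨l', m'⟩
  by_cases hm : m = m' <;> simp [cqMatrix, margLM, Matrix.blockDiagonal_apply, Matrix.sum_apply, hm]

lemma margKM_cqMatrix [Fintype L] (B : K → M → Matrix L L ℂ) :
    margKM (cqMatrix B) = Matrix.diagonal fun p : K × M => (B p.1 p.2).trace := by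
  ext ⟨k, m⟩ ⟨k', m'⟩
  by_cases h : k = k' ∧ m = m'
  · obtain ⟨rfl, rfl⟩ := h
    simp [cqMatrix, margKM, Matrix.trace]
  · simp [cqMatrix, margKM, Prod.ext_iff, h]

lemma margM_cqMatrix [Fintype K] [Fintype L] (B : K → M → Matrix L L ℂ) :
    margM (cqMatrix B) = Matrix.diagonal fun m => ∑ k, (B k m).trace := by
  ext m m'
  by_cases h : m = m'
  · subst h
    simp [cqMatrix, margM, Matrix.trace]
  · simp [cqMatrix, margM, h]

lemma Matrix.PosSemidef.ofReal_trace_re [Fintype L] {A : Matrix L L ℂ} (hA : A.PosSemidef) :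
    ((A.trace.re : ℝ) : ℂ) = A.trace :=
  (Complex.eq_re_of_ofReal_le hA.trace_nonneg).symm

variable [Fintype K] [Fintype L] [DecidableEq L] [Fintype M]

/-- The `KLM`- and `LM`-terms are compared by the subadditivity `H(∑ₖ Bₖ) ≤ ∑ₖ H(Bₖ)`; the
remaining two terms are classical entropies. -/
lemma CMI_cqMatrix_le {B : K → M → Matrix L L ℂ} (hB : ∀ k m, (B k m).PosSemidef) :
    CMI (cqMatrix B) ≤ (∑ k, ∑ m, (B k m).trace.re) * Real.logb 2 (Fintype.card K) := by
  have hKM : vnEntropy (margKM (cqMatrix B)) = ∑ m, ∑ k, entPhi (B k m).trace.re := by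
    rw [margKM_cqMatrix, ← Fintype.sum_prod_type_right (f := fun p => entPhi (B p.1 p.2).trace.re),
      ← vnEntropy_diagonal]
    simp only [(hB _ _).ofReal_trace_re]
  have hM : vnEntropy (margM (cqMatrix B)) = ∑ m, entPhi (∑ k, (B k m).trace.re) := by
    rw [margM_cqMatrix, ← vnEntropy_diagonal]
    simp only [Complex.ofReal_sum, (hB _ _).ofReal_trace_re]
  have hLM : vnEntropy (margLM (cqMatrix B)) ≤ ∑ m, ∑ k, vnEntropy (B k m) := by
    rw [margLM_cqMatrix, vnEntropy_blockDiagonal fun m =>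
      (Matrix.posSemidef_sum Finset.univ fun k _ => hB k m).1]
    exact Finset.sum_le_sum fun m _ => vnEntropy_sum_le fun k => hB k m
  have hgroup : ∀ m, ∑ k, entPhi (B k m).trace.re
      ≤ (∑ k, (B k m).trace.re) * Real.logb 2 (Fintype.card K)
        + entPhi (∑ k, (B k m).trace.re) :=
    fun m => sum_entPhi_le fun k => Complex.nonneg_iff.1 (hB k m).trace_nonneg |>.1
  calc CMI (cqMatrix B)
      ≤ ∑ m, (∑ k, entPhi (B k m).trace.re - entPhi (∑ k, (B k m).trace.re)) := by
        rw [CMI, hKM, hM, vnEntropy_cqMatrix fun k m => (hB k m).1, Finset.sum_comm (γ := K),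
          Finset.sum_sub_distrib]
        linarith
    _ ≤ ∑ m, (∑ k, (B k m).trace.re) * Real.logb 2 (Fintype.card K) :=
        Finset.sum_le_sum fun m _ => by linarith [hgroup m]
    _ = (∑ k, ∑ m, (B k m).trace.re) * Real.logb 2 (Fintype.card K) := by
        simp only [Finset.sum_mul]
        exact Finset.sum_comm

end ClassicalQuantum

section Instruments

variable {B : Type*} [Fintype B] {dB' nk : ℕ}

lemma instrApply_add (V : Fin nk → Matrix (Fin dB') B ℂ) (P Q : Matrix B B ℂ) :
    instrApply V (P + Q) = instrApply V P + instrApply V Q := by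
  simp [instrApply, Matrix.mul_add, Matrix.add_mul, Finset.sum_add_distrib]

lemma instrApply_smul (V : Fin nk → Matrix (Fin dB') B ℂ) (c : ℂ) (P : Matrix B B ℂ) :
    instrApply V (c • P) = c • instrApply V P := by
  simp [instrApply, Finset.smul_sum]

lemma instrApply_sum {ι : Type*} [Fintype ι] (V : Fin nk → Matrix (Fin dB') B ℂ)
    (P : ι → Matrix B B ℂ) : instrApply V (∑ i, P i) = ∑ i, instrApply V (P i) := by
  simp only [instrApply, Matrix.mul_sum, Matrix.sum_mul]
  exact Finset.sum_comm

lemma posSemidef_instrApply (V : Fin nk → Matrix (Fin dB') B ℂ) {P : Matrix B B ℂ}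
    (hP : P.PosSemidef) : (instrApply V P).PosSemidef :=
  Matrix.posSemidef_sum Finset.univ fun u _ => hP.mul_mul_conjTranspose_same (V u)

lemma sum_trace_instrApply [DecidableEq B] {m : ℕ} {V : Fin m → Fin nk → Matrix (Fin dB') B ℂ}
    (hV : ∑ y, ∑ u, (V y u)ᴴ * V y u = 1) (P : Matrix B B ℂ) :
    ∑ y, (instrApply (V y) P).trace = P.trace := by
  calc ∑ y, (instrApply (V y) P).trace = ((∑ y, ∑ u, (V y u)ᴴ * V y u) * P).trace := by
        simp only [instrApply, Matrix.trace_sum, Finset.sum_mul, Matrix.trace_mul_cycle (V _ _)]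
    _ = P.trace := by rw [hV, Matrix.one_mul]

end Instruments

section Extensions

variable {A X B : Type*} {dB' nk m : ℕ}

lemma isHermitian_cqStateS [DecidableEq A] [DecidableEq X] {dE : ℕ} (p : X → Fin m → ℝ)
    {ext : A → X → Fin m → Matrix (Fin dB' × Fin dE) (Fin dB' × Fin dE) ℂ}
    (hext : ∀ a x y, (ext a x y).IsHermitian) : (cqStateS p ext).IsHermitian := by
  refine Matrix.IsHermitian.ext fun q q' => ?_
  by_cases h : q.1 = q'.1 ∧ q.2.2.2 = q'.2.2.2
  · obtain ⟨h₁, h₂⟩ := h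
    simp [cqStateS, h₁, h₂, (hext _ _ _).apply]
  · have h' : ¬ (q'.1 = q.1 ∧ q'.2.2.2 = q.2.2.2) := fun ⟨h₁, h₂⟩ => h ⟨h₁.symm, h₂.symm⟩
    simp [cqStateS, h, h']

variable [Fintype B]

def trivialExtension (V : Fin m → Fin nk → Matrix (Fin dB') B ℂ) (ρ : A → X → Matrix B B ℂ)
    (a : A) (x : X) (y : Fin m) : Matrix (Fin dB' × Fin 1) (Fin dB' × Fin 1) ℂ :=
  (instrApply (V y) (ρ a x)).submatrix Prod.fst Prod.fst

lemma cqStateS_trivialExtension [DecidableEq A] [DecidableEq X]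
    (V : Fin m → Fin nk → Matrix (Fin dB') B ℂ) (ρ : A → X → Matrix B B ℂ) (p : X → Fin m → ℝ) :
    cqStateS p (trivialExtension V ρ) = cqMatrix fun (k : X × A) (q : Fin 1 × Fin m) =>
      (p k.1 q.2 : ℂ) • instrApply (V q.2) (ρ k.2 k.1) := by
  ext ⟨k, b, e, y⟩ ⟨k', b', e', y'⟩
  simp [cqStateS, cqMatrix, trivialExtension, Subsingleton.elim e e']

lemma sum_trace_smul_instrApply_eq_one [Fintype A] [Fintype X] [DecidableEq B] [Nonempty X]
    {ρ : A → X → Matrix B B ℂ} (hρ : IsAssemblage ρ) {V : Fin m → Fin nk → Matrix (Fin dB') B ℂ}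
    (hV : ∑ y, ∑ u, (V y u)ᴴ * V y u = 1) {p : X → Fin m → ℝ}
    (hp : ∀ y, IsProbDist fun x => p x y) :
    ∑ k : X × A, ∑ q : Fin 1 × Fin m, ((p k.1 q.2 : ℂ) • instrApply (V q.2) (ρ k.2 k.1)).trace
      = 1 := by
  obtain ⟨x₀⟩ := ‹Nonempty X›
  have hns : ∀ x y, ∑ a, (instrApply (V y) (ρ a x)).trace
      = (instrApply (V y) (∑ a, ρ a x₀)).trace := fun x y => by
    rw [← Matrix.trace_sum, ← instrApply_sum, hρ.2.2 x x₀]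
  have hp₁ : ∀ y, ∑ x, (p x y : ℂ) = 1 := fun y => by exact_mod_cast (hp y).2
  calc _ = ∑ y, ∑ x, (p x y : ℂ) * ∑ a, (instrApply (V y) (ρ a x)).trace := by
        simp only [Fintype.sum_prod_type, Fintype.sum_unique, Matrix.trace_smul, smul_eq_mul,
          Finset.mul_sum]
        exact (Finset.sum_congr rfl fun x _ => Finset.sum_comm).trans Finset.sum_comm
    _ = ∑ y, (instrApply (V y) (∑ a, ρ a x₀)).trace := by
        simp only [hns, ← Finset.sum_mul, hp₁, one_mul]
    _ = 1 := by rw [sum_trace_instrApply hV, Matrix.trace_sum, hρ.2.1 x₀]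

end Extensions

section Flag

variable {A X : Type*} {dB' d₁ d₂ m : ℕ}

/-- The extension on `E = E₁ ⊕ E₂` whose `E`-part carries a classical flag selecting `ext₁`
(weight `c₁`) or `ext₂` (weight `c₂`). -/
def flagExtension (c₁ c₂ : ℝ)
    (ext₁ : A → X → Fin m → Matrix (Fin dB' × Fin d₁) (Fin dB' × Fin d₁) ℂ)
    (ext₂ : A → X → Fin m → Matrix (Fin dB' × Fin d₂) (Fin dB' × Fin d₂) ℂ) (a : A) (x : X)
    (y : Fin m) : Matrix (Fin dB' × Fin (d₁ + d₂)) (Fin dB' × Fin (d₁ + d₂)) ℂ :=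
  (Matrix.fromBlocks ((c₁ : ℂ) • ext₁ a x y) 0 0 ((c₂ : ℂ) • ext₂ a x y)).submatrix
    (((Equiv.refl _).prodCongr finSumFinEquiv.symm).trans (Equiv.prodSumDistrib _ _ _))
    (((Equiv.refl _).prodCongr finSumFinEquiv.symm).trans (Equiv.prodSumDistrib _ _ _))

lemma Matrix.PosSemidef.fromBlocks_zero {n n' : Type*} [Fintype n] [Fintype n']
    {P : Matrix n n ℂ} {Q : Matrix n' n' ℂ} (hP : P.PosSemidef) (hQ : Q.PosSemidef) :
    (Matrix.fromBlocks P 0 0 Q).PosSemidef := by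
  refine .of_dotProduct_mulVec_nonneg (hP.1.fromBlocks (by simp) hQ.1) fun v => ?_
  simpa [Matrix.fromBlocks_mulVec, dotProduct, Fintype.sum_sum_type] using
    add_nonneg (hP.dotProduct_mulVec_nonneg (v ∘ Sum.inl))
      (hQ.dotProduct_mulVec_nonneg (v ∘ Sum.inr))

variable {c₁ c₂ : ℝ}
  {ext₁ : A → X → Fin m → Matrix (Fin dB' × Fin d₁) (Fin dB' × Fin d₁) ℂ}
  {ext₂ : A → X → Fin m → Matrix (Fin dB' × Fin d₂) (Fin dB' × Fin d₂) ℂ}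

lemma posSemidef_flagExtension (hc₁ : 0 ≤ c₁) (hc₂ : 0 ≤ c₂)
    (h₁ : ∀ a x y, (ext₁ a x y).PosSemidef) (h₂ : ∀ a x y, (ext₂ a x y).PosSemidef)
    (a : A) (x : X) (y : Fin m) : (flagExtension c₁ c₂ ext₁ ext₂ a x y).PosSemidef :=
  ((h₁ a x y).smul (by exact_mod_cast hc₁)).fromBlocks_zero
    ((h₂ a x y).smul (by exact_mod_cast hc₂)) |>.submatrix _

lemma ptrace2_flagExtension (a : A) (x : X) (y : Fin m) :
    ptrace2 (flagExtension c₁ c₂ ext₁ ext₂ a x y)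
      = (c₁ : ℂ) • ptrace2 (ext₁ a x y) + (c₂ : ℂ) • ptrace2 (ext₂ a x y) := by
  ext b b'
  simp [ptrace2, flagExtension, Fin.sum_univ_add, Finset.mul_sum]

lemma sum_flagExtension_eq [Fintype A]
    (hns₁ : ∀ (x x' : X) (y : Fin m), ∑ a, ext₁ a x y = ∑ a, ext₁ a x' y)
    (hns₂ : ∀ (x x' : X) (y : Fin m), ∑ a, ext₂ a x y = ∑ a, ext₂ a x' y) (x x' : X) (y : Fin m) :
    ∑ a, flagExtension c₁ c₂ ext₁ ext₂ a x y = ∑ a, flagExtension c₁ c₂ ext₁ ext₂ a x' y := by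
  have h₁ := fun i j => congrFun (congrFun (hns₁ x x' y) i) j
  have h₂ := fun i j => congrFun (congrFun (hns₂ x x' y) i) j
  simp only [Matrix.sum_apply] at h₁ h₂
  ext ⟨b, e⟩ ⟨b', e'⟩
  induction e using Fin.addCases <;> induction e' using Fin.addCases <;>
    simp [flagExtension, Matrix.sum_apply, ← Finset.mul_sum, h₁, h₂]

variable [DecidableEq A] [DecidableEq X]

lemma cqStateS_flagExtension (p : X → Fin m → ℝ) :
    cqStateS p (flagExtension c₁ c₂ ext₁ ext₂)
      = condSum ((finSumFinEquiv.symm.prodCongr (Equiv.refl _)).trans (Equiv.sumProdDistrib _ _ _))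
          ((c₁ : ℂ) • cqStateS p ext₁) ((c₂ : ℂ) • cqStateS p ext₂) := by
  ext ⟨k, b, e, y⟩ ⟨k', b', e', y'⟩
  induction e using Fin.addCases <;> induction e' using Fin.addCases <;>
    simp [cqStateS, condSum, flagExtension, mul_left_comm]

lemma CMI_cqStateS_flagExtension [Fintype A] [Fintype X] (p : X → Fin m → ℝ)
    (h₁ : ∀ a x y, (ext₁ a x y).IsHermitian) (h₂ : ∀ a x y, (ext₂ a x y).IsHermitian) :
    CMI (cqStateS p (flagExtension c₁ c₂ ext₁ ext₂))
      = c₁ * CMI (cqStateS p ext₁) + c₂ * CMI (cqStateS p ext₂) := by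
  rw [cqStateS_flagExtension, CMI_condSum _ ((isHermitian_cqStateS p h₁).smul
      (Complex.conj_ofReal c₁)) ((isHermitian_cqStateS p h₂).smul (Complex.conj_ofReal c₂)),
    CMI_real_smul (isHermitian_cqStateS p h₁), CMI_real_smul (isHermitian_cqStateS p h₂)]

end Flag

lemma IsAssemblage.convexComb {A X B : Type*} [Fintype A] [Fintype B]
    {ρ σ : A → X → Matrix B B ℂ} (hρ : IsAssemblage ρ) (hσ : IsAssemblage σ) {c₁ c₂ : ℝ}
    (hc₁ : 0 ≤ c₁) (hc₂ : 0 ≤ c₂) (hc : c₁ + c₂ = 1) :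
    IsAssemblage fun a x => (c₁ : ℂ) • ρ a x + (c₂ : ℂ) • σ a x := by
  refine ⟨fun a x => ((hρ.1 a x).smul ?_).add ((hσ.1 a x).smul ?_), fun x => ?_,
    fun x x' => ?_⟩
  · exact_mod_cast hc₁
  · exact_mod_cast hc₂
  · simp only [Matrix.trace_add, Matrix.trace_smul, smul_eq_mul, Finset.sum_add_distrib,
      ← Finset.mul_sum, hρ.2.1 x, hσ.2.1 x, mul_one]
    exact_mod_cast hc
  · simp only [Finset.sum_add_distrib, ← Finset.smul_sum, hρ.2.2 x x', hσ.2.2 x x']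

/-- `hc₀` covers the junk value `sInf W = 0` when `W` is unbounded below. -/
lemma sInf_le_of_convexComb_mem {W W₁ W₂ : Set ℝ} (h₁ : W₁.Nonempty) (h₂ : W₂.Nonempty)
    {a b c : ℝ} (ha : 0 ≤ a) (hb : 0 ≤ b) (hab : a + b = 1)
    (hW : ∀ w₁ ∈ W₁, ∀ w₂ ∈ W₂, a * w₁ + b * w₂ ∈ W) (hc₀ : 0 ≤ c)
    (hc : a * sInf W₁ + b * sInf W₂ ≤ c) : sInf W ≤ c := by
  by_cases hbdd : BddBelow W
  · refine le_of_forall_pos_le_add fun ε hε => ?_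
    obtain ⟨w₁, hw₁, hlt₁⟩ := Real.lt_sInf_add_pos h₁ hε
    obtain ⟨w₂, hw₂, hlt₂⟩ := Real.lt_sInf_add_pos h₂ hε
    calc sInf W ≤ a * w₁ + b * w₂ := csInf_le hbdd (hW w₁ hw₁ w₂ hw₂)
      _ ≤ a * (sInf W₁ + ε) + b * (sInf W₂ + ε) := by gcongr
      _ = a * sInf W₁ + b * sInf W₂ + ε := by linear_combination ε * hab
      _ ≤ c + ε := by linarith
  · rwa [Real.sInf_of_not_bddBelow hbdd]

section Steering

variable {A X B : Type*} [Fintype A] [DecidableEq A] [Fintype X] [DecidableEq X] [Fintype B]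
  {dB' nk m : ℕ}

/-- The values of `I(XĀ;B'|EY)` over the non-signaling extensions, for a fixed 1W-LOCC
operation `(V, pXY)`: the set whose infimum is taken in `IS`. -/
def extensionCMIs (ρ : A → X → Matrix B B ℂ) (V : Fin m → Fin nk → Matrix (Fin dB') B ℂ)
    (pXY : X → Fin m → ℝ) : Set ℝ :=
  { w : ℝ | ∃ dE : ℕ, 1 ≤ dE ∧
    ∃ ext : A → X → Fin m → Matrix (Fin dB' × Fin dE) (Fin dB' × Fin dE) ℂ,
      (∀ a x y, (ext a x y).PosSemidef) ∧
      (∀ a x y, ptrace2 (ext a x y) = instrApply (V y) (ρ a x)) ∧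
      (∀ (x x' : X) (y : Fin m), ∑ a, ext a x y = ∑ a, ext a x' y) ∧
      w = CMI (cqStateS pXY ext) }

lemma trivialExtension_mem {ρ : A → X → Matrix B B ℂ} (hρ : IsAssemblage ρ)
    (V : Fin m → Fin nk → Matrix (Fin dB') B ℂ) (p : X → Fin m → ℝ) :
    CMI (cqStateS p (trivialExtension V ρ)) ∈ extensionCMIs ρ V p := by
  refine ⟨1, le_rfl, trivialExtension V ρ,
    fun a x y => (posSemidef_instrApply _ (hρ.1 a x)).submatrix _, fun a x y => ?_,
    fun x x' y => ?_, rfl⟩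
  · ext b b'
    simp [ptrace2, trivialExtension]
  · have h : ∀ x, ∑ a, trivialExtension V ρ a x y
        = (instrApply (V y) (∑ a, ρ a x)).submatrix Prod.fst Prod.fst := fun x => by
      ext; simp [trivialExtension, instrApply_sum, Matrix.sum_apply]
    rw [h, h, hρ.2.2 x x']

lemma convexComb_mem_extensionCMIs {ρ σ : A → X → Matrix B B ℂ} {c₁ c₂ : ℝ} (hc₁ : 0 ≤ c₁)
    (hc₂ : 0 ≤ c₂) {V : Fin m → Fin nk → Matrix (Fin dB') B ℂ} {p : X → Fin m → ℝ} {w₁ w₂ : ℝ}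
    (hw₁ : w₁ ∈ extensionCMIs ρ V p) (hw₂ : w₂ ∈ extensionCMIs σ V p) :
    c₁ * w₁ + c₂ * w₂ ∈ extensionCMIs (fun a x => (c₁ : ℂ) • ρ a x + (c₂ : ℂ) • σ a x) V p := by
  obtain ⟨d₁, -, ext₁, hpsd₁, hpt₁, hns₁, rfl⟩ := hw₁
  obtain ⟨d₂, hd₂, ext₂, hpsd₂, hpt₂, hns₂, rfl⟩ := hw₂
  refine ⟨d₁ + d₂, le_add_left hd₂, flagExtension c₁ c₂ ext₁ ext₂,
    posSemidef_flagExtension hc₁ hc₂ hpsd₁ hpsd₂, fun a x y => ?_,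
    sum_flagExtension_eq hns₁ hns₂, ?_⟩
  · rw [ptrace2_flagExtension, hpt₁, hpt₂, instrApply_add, instrApply_smul, instrApply_smul]
  · rw [CMI_cqStateS_flagExtension p (fun a x y => (hpsd₁ a x y).1) fun a x y => (hpsd₂ a x y).1]

variable [DecidableEq B]

lemma CMI_trivialExtension_le [Nonempty X] {ρ : A → X → Matrix B B ℂ} (hρ : IsAssemblage ρ)
    {V : Fin m → Fin nk → Matrix (Fin dB') B ℂ} (hV : ∑ y, ∑ u, (V y u)ᴴ * V y u = 1)
    {p : X → Fin m → ℝ} (hp : ∀ y, IsProbDist fun x => p x y) :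
    CMI (cqStateS p (trivialExtension V ρ)) ≤ Real.logb 2 (Fintype.card (X × A)) := by
  rw [cqStateS_trivialExtension]
  refine (CMI_cqMatrix_le fun k q => ((posSemidef_instrApply _ (hρ.1 _ _)).smul ?_)).trans_eq ?_
  · exact_mod_cast (hp q.2).1 k.1
  · simp only [← Complex.re_sum, sum_trace_smul_instrApply_eq_one hρ hV hp, Complex.one_re,
      one_mul]

/-- The 1W-LOCC operations and their values `inf_ext I(XĀ;B'|EY)`: the set whose supremum is
`IS`. -/
def operationValues (ρ : A → X → Matrix B B ℂ) : Set ℝ :=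
  { v : ℝ | ∃ (m dB' nk : ℕ) (V : Fin m → Fin nk → Matrix (Fin dB') B ℂ)
      (pXY : X → Fin m → ℝ), 1 ≤ m ∧ 1 ≤ dB' ∧
      (∑ y, ∑ u, (V y u)ᴴ * V y u) = (1 : Matrix B B ℂ) ∧
      (∀ y, IsProbDist fun x => pXY x y) ∧
      v = sInf (extensionCMIs ρ V pXY) }

lemma bddAbove_operationValues [Nonempty X] {ρ : A → X → Matrix B B ℂ} (hρ : IsAssemblage ρ) :
    BddAbove (operationValues ρ) := by
  refine ⟨Real.logb 2 (Fintype.card (X × A)), ?_⟩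
  rintro v ⟨m, dB', nk, V, p, -, -, hV, hp, rfl⟩
  by_cases hW : BddBelow (extensionCMIs ρ V p)
  · exact csInf_le_of_le hW (trivialExtension_mem hρ V p) (CMI_trivialExtension_le hρ hV hp)
  · rw [Real.sInf_of_not_bddBelow hW]
    exact div_nonneg (Real.log_natCast_nonneg _) (Real.log_nonneg one_le_two)

lemma sInf_extensionCMIs_le_IS [Nonempty X] {ρ : A → X → Matrix B B ℂ} (hρ : IsAssemblage ρ)
    {V : Fin m → Fin nk → Matrix (Fin dB') B ℂ} (hm : 1 ≤ m) (hdB' : 1 ≤ dB')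
    (hV : ∑ y, ∑ u, (V y u)ᴴ * V y u = 1) {p : X → Fin m → ℝ}
    (hp : ∀ y, IsProbDist fun x => p x y) : sInf (extensionCMIs ρ V p) ≤ IS ρ :=
  le_csSup (bddAbove_operationValues hρ) ⟨m, dB', nk, V, p, hm, hdB', hV, hp, rfl⟩

/-- Measuring `B` completely and keeping a one-dimensional output gives the value `0`. -/
lemma zero_mem_operationValues [Nonempty X] (ρ : A → X → Matrix B B ℂ) :
    (0 : ℝ) ∈ operationValues ρ := by
  obtain ⟨x₀⟩ := ‹Nonempty X›
  let e := Fintype.equivFin B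
  let V : Fin 1 → Fin (Fintype.card B) → Matrix (Fin 1) B ℂ :=
    fun _ u => Matrix.single 0 (e.symm u) 1
  refine ⟨1, 1, Fintype.card B, V, fun x _ => if x = x₀ then 1 else 0, le_rfl, le_rfl, ?_,
    fun y => ⟨fun x => by positivity, by simp⟩, ?_⟩
  · simp only [V, Fintype.sum_unique]
    rw [e.symm.sum_comp fun b => (Matrix.single 0 b 1 : Matrix (Fin 1) B ℂ)ᴴ * Matrix.single 0 b 1]
    simp [Matrix.conjTranspose_single, Matrix.single_mul_single_same, Matrix.sum_single_one]
  · refine le_antisymm (Real.sInf_nonneg ?_) (Real.sInf_nonpos ?_) <;>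
      rintro w ⟨dE, -, ext, -, -, -, rfl⟩ <;> simp [CMI_eq_zero_of_unique]

lemma IS_nonneg [Nonempty X] (ρ : A → X → Matrix B B ℂ) : 0 ≤ IS ρ :=
  Real.sSup_nonneg' ⟨0, zero_mem_operationValues ρ, le_rfl⟩

end Steering

theorem intrinsic_steerability_convex_general {r s dB : ℕ}
    (hs : 1 ≤ s)
    (ρ σ : Fin r → Fin s → Matrix (Fin dB) (Fin dB) ℂ)
    (hρ : IsAssemblage ρ) (hσ : IsAssemblage σ)
    (lam : ℝ) (h0 : 0 ≤ lam) (h1 : lam ≤ 1)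
    (τ : Fin r → Fin s → Matrix (Fin dB) (Fin dB) ℂ)
    (hτ : ∀ a x, τ a x = ((lam : ℝ) : ℂ) • ρ a x + ((1 - lam : ℝ) : ℂ) • σ a x) :
    IsAssemblage τ ∧ IS τ ≤ lam * IS ρ + (1 - lam) * IS σ := by
  have : Nonempty (Fin s) := ⟨⟨0, hs⟩⟩
  have h1' : 0 ≤ 1 - lam := sub_nonneg.2 h1
  obtain rfl : τ = fun a x => (lam : ℂ) • ρ a x + ((1 - lam : ℝ) : ℂ) • σ a x :=
    funext fun a => funext (hτ a)
  have hRHS : 0 ≤ lam * IS ρ + (1 - lam) * IS σ :=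
    add_nonneg (mul_nonneg h0 (IS_nonneg ρ)) (mul_nonneg h1' (IS_nonneg σ))
  refine ⟨hρ.convexComb hσ h0 h1' (add_sub_cancel lam 1), Real.sSup_le ?_ hRHS⟩
  rintro v ⟨m, dB', nk, V, p, hm, hdB', hV, hp, rfl⟩
  exact sInf_le_of_convexComb_mem ⟨_, trivialExtension_mem hρ V p⟩
    ⟨_, trivialExtension_mem hσ V p⟩ h0 h1' (add_sub_cancel lam 1)
    (fun w₁ hw₁ w₂ hw₂ => convexComb_mem_extensionCMIs h0 h1' hw₁ hw₂)
    hRHS (by gcongr <;> exact sInf_extensionCMIs_le_IS ‹_› hm hdB' hV hp)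

/-- Intrinsic steerability is convex. -/
theorem intrinsic_steerability_convex {r s dB : ℕ}
    (hr : 1 ≤ r) (hs : 1 ≤ s) (hdB : 1 ≤ dB)
    (ρ σ : Fin r → Fin s → Matrix (Fin dB) (Fin dB) ℂ)
    (hρ : IsAssemblage ρ) (hσ : IsAssemblage σ)
    (lam : ℝ) (h0 : 0 ≤ lam) (h1 : lam ≤ 1)
    (τ : Fin r → Fin s → Matrix (Fin dB) (Fin dB) ℂ)
    (hτ : ∀ a x, τ a x = ((lam : ℝ) : ℂ) • ρ a x + ((1 - lam : ℝ) : ℂ) • σ a x) :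
    IsAssemblage τ ∧ IS τ ≤ lam * IS ρ + (1 - lam) * IS σ :=
  intrinsic_steerability_convex_general hs ρ σ hρ hσ lam h0 h1 τ hτ
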